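/- arXiv:2002.01959 — 4 statements merged into one kernel-verified Lean document; each statement's English description precedes it below -/
import Mathlib

section
/- Let H be a Hilbert space, V_1, ..., V_n vector spaces, and T_k : H → V_k linear operators for k = 1, ..., n such that each kernel ker(T_k) is closed in H. If the system of closed subspaces (ker T_1)^⊥, ..., (ker T_n)^⊥ possesses the inverse best approximation property, then for arbitrary elements v_1 ∈ Ran(T_1), ..., v_n ∈ Ran(T_n) there exists x ∈ H with T_k x = v_k for all k. -/
noncomputable def orthProjCLM {𝕜 H : Type*} [RCLike 𝕜] [NormedAddCommGroup H]
    [InnerProductSpace 𝕜 H] [CompleteSpace H] (K : Submodule 𝕜 H)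
    (hK : IsClosed (K : Set H)) : H →L[𝕜] H :=
  haveI : CompleteSpace K := hK.completeSpace_coe
  K.subtypeL.comp K.orthogonalProjectionOnto

/-- The system of closed subspaces `K 0, ..., K (n-1)` possesses the
inverse best approximation property: for arbitrary `x i ∈ K i` there is `y`
whose orthogonal projection onto each `K i` equals `x i`. -/
def IBAP {𝕜 H : Type*} [RCLike 𝕜] [NormedAddCommGroup H] [InnerProductSpace 𝕜 H]
    [CompleteSpace H] {n : ℕ} (K : Fin n → Submodule 𝕜 H)
    (hK : ∀ i, IsClosed ((K i : Set H))) : Prop :=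
  ∀ x : Fin n → H, (∀ i, x i ∈ K i) →
    ∃ y : H, ∀ i, orthProjCLM (K i) (hK i) y = x i

/-! If `T x = v` then `T (P x) = v` for the projection `P` onto `(ker T)ᗮ`, because `x - P x`
is the projection of `x` onto `(ker T)ᗮᗮ = ker T` (here the closedness of `ker T` enters).
So it suffices to prescribe the projections of the solution onto the spaces `(ker T k)ᗮ`,
which is exactly what the inverse best approximation property allows. -/

section

variable {𝕜 H : Type*} [RCLike 𝕜] [NormedAddCommGroup H] [InnerProductSpace 𝕜 H]
  [CompleteSpace H]

theorem orthProjCLM_mem (K : Submodule 𝕜 H) (hK : IsClosed (K : Set H)) (x : H) :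
    orthProjCLM K hK x ∈ K :=
  have : CompleteSpace K := hK.completeSpace_coe
  (K.orthogonalProjectionOnto x).2

theorem sub_orthProjCLM_orthogonal_mem {K : Submodule 𝕜 H} (hK : IsClosed (K : Set H)) (x : H) :
    x - orthProjCLM Kᗮ K.isClosed_orthogonal x ∈ K := by
  have : CompleteSpace K := hK.completeSpace_coe
  have hP : orthProjCLM Kᗮ K.isClosed_orthogonal x = Kᗮ.starProjection x := rfl
  rw [hP, Submodule.starProjection_orthogonal_val, sub_sub_cancel]
  exact K.starProjection_apply_mem x

theorem LinearMap.map_orthProjCLM_orthogonal_ker {V : Type*} [AddCommGroup V] [Module 𝕜 V]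
    (T : H →ₗ[𝕜] V) (hT : IsClosed (LinearMap.ker T : Set H)) (x : H) :
    T (orthProjCLM (LinearMap.ker T)ᗮ (LinearMap.ker T).isClosed_orthogonal x) = T x := by
  have := sub_orthProjCLM_orthogonal_mem hT x
  rw [LinearMap.mem_ker, map_sub, sub_eq_zero] at this
  exact this.symm

end

/-- if each `ker (T k)` is closed and the system
`(ker T 1)ᗮ, ..., (ker T n)ᗮ` has the IBAP, then the system of equations
`T k x = v k` is solvable for all `v k` in the ranges. -/
theorem stmt_2 {𝕜 H : Type*} [RCLike 𝕜] [NormedAddCommGroup H]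
    [InnerProductSpace 𝕜 H] [CompleteSpace H] {n : ℕ}
    (V : Fin n → Type*) [∀ k, AddCommGroup (V k)] [∀ k, Module 𝕜 (V k)]
    (T : ∀ k, H →ₗ[𝕜] V k)
    (hker : ∀ k, IsClosed ((LinearMap.ker (T k) : Submodule 𝕜 H) : Set H))
    (h : IBAP (fun k => (LinearMap.ker (T k))ᗮ)
      (fun k => Submodule.isClosed_orthogonal _)) :
    ∀ v : ∀ k, V k, (∀ k, v k ∈ LinearMap.range (T k)) →
      ∃ x : H, ∀ k, T k x = v k := by
  intro v hv
  choose u hu using hv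
  let P : ∀ k, H →L[𝕜] H := fun k => orthProjCLM _ (LinearMap.ker (T k)).isClosed_orthogonal
  obtain ⟨y, hy⟩ := h (fun k => P k (u k)) fun k => orthProjCLM_mem _ _ _
  refine ⟨y, fun k => ?_⟩
  calc T k y = T k (P k y) := ((T k).map_orthProjCLM_orthogonal_ker (hker k) y).symm
    _ = T k (P k (u k)) := congrArg (T k) (hy k)
    _ = v k := by rw [(T k).map_orthProjCLM_orthogonal_ker (hker k), hu k]
end

section
/- Let H be a Hilbert space and H_1, ..., H_n closed subspaces of H. The system H_1, ..., H_n possesses the inverse best approximation property if and only if for every i = 1, ..., n there exists a constant δ_i > 0 such that dist(x, Σ_{j≠i} H_j) ≥ δ_i ‖x‖ for every x ∈ H_i, where Σ_{j≠i} H_j denotes the sum of the subspaces H_j over j ≠ i. -/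
open Finset Metric
open scoped InnerProductSpace InnerProduct

theorem PiLp.norm_le_sum_norm {p : ENNReal} [Fact (1 ≤ p)] {ι : Type*} [Fintype ι]
    {β : ι → Type*} [∀ i, SeminormedAddCommGroup (β i)] (u : PiLp p β) :
    ‖u‖ ≤ ∑ i, ‖u i‖ := by
  classical
  calc ‖u‖ = ‖∑ i, PiLp.single p i (u i)‖ := by
        conv_lhs => rw [← WithLp.toLp_ofLp (p := p) u, ← univ_sum_single u.ofLp]
        rw [WithLp.toLp_sum]; rfl
    _ ≤ ∑ i, ‖PiLp.single p i (u i)‖ := norm_sum_le _ _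
    _ = ∑ i, ‖u i‖ := by simp only [PiLp.norm_single]

theorem Submodule.mem_iSup_ne_iff_exists_sum {R N ι : Type*} [Semiring R] [AddCommMonoid N]
    [Module R N] [Fintype ι] [DecidableEq ι] (p : ι → Submodule R N) (i : ι) (z : N) :
    z ∈ ⨆ j, ⨆ (_ : j ≠ i), p j ↔ ∃ μ : ∀ j, p j, ∑ j ∈ univ.erase i, (μ j : N) = z := by
  have : ⨆ j, ⨆ (_ : j ≠ i), p j = ⨆ j ∈ univ.erase i, p j := by
    simp only [mem_erase, mem_univ, and_true]
  rw [this, mem_iSup_finset_iff_exists_sum]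

section SumOfSubspaces

variable {𝕜 H ι : Type*} [Ring 𝕜] [NormedAddCommGroup H] [Module 𝕜 H] [Fintype ι]
  (K : ι → Submodule 𝕜 H)

theorem infDist_iSup_ne_le_norm_sum (u : ι → H) (hu : ∀ j, u j ∈ K j) (i : ι) :
    infDist (u i) (⨆ j, ⨆ (_ : j ≠ i), K j : Submodule 𝕜 H) ≤ ‖∑ j, u j‖ := by
  classical
  have hmem : -∑ j ∈ univ.erase i, u j ∈ ⨆ j, ⨆ (_ : j ≠ i), K j :=
    neg_mem ((Submodule.mem_iSup_ne_iff_exists_sum K i _).2 ⟨fun j => ⟨u j, hu j⟩, rfl⟩)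
  calc infDist (u i) _ ≤ dist (u i) (-∑ j ∈ univ.erase i, u j) := infDist_le_dist_of_mem hmem
    _ = ‖∑ j, u j‖ := by rw [dist_eq_norm, sub_neg_eq_add, add_sum_erase _ _ (mem_univ i)]

theorem exists_mul_norm_le_norm_sum_iff (p : ENNReal) [Fact (1 ≤ p)] :
    (∃ c > 0, ∀ u : PiLp p (fun i => K i), c * ‖u‖ ≤ ‖∑ i, (u i : H)‖) ↔
      ∀ i, ∃ δ : ℝ, 0 < δ ∧ ∀ x ∈ K i,
        δ * ‖x‖ ≤ infDist x (⨆ j, ⨆ (_ : j ≠ i), K j : Submodule 𝕜 H) := by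
  classical
  constructor
  · rintro ⟨c, hc, hcS⟩ i
    refine ⟨c, hc, fun x hx => ?_⟩
    rw [le_infDist ⟨0, zero_mem _⟩]
    intro z hz
    obtain ⟨μ, hμ⟩ := (Submodule.mem_iSup_ne_iff_exists_sum K i (-z)).1 (neg_mem hz)
    set u : PiLp p (fun j => K j) := WithLp.toLp p (Function.update μ i ⟨x, hx⟩)
    have hsum : ∑ j, (u j : H) = x - z := by
      rw [← add_sum_erase _ _ (mem_univ i), sub_eq_add_neg, ← hμ]
      congr 1
      · simp [u]
      · refine sum_congr rfl fun j hj => ?_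
        simp [u, Function.update_of_ne (ne_of_mem_erase hj)]
    calc c * ‖x‖ = c * ‖u i‖ := by simp [u]
      _ ≤ c * ‖u‖ := by gcongr; exact PiLp.norm_apply_le u i
      _ ≤ dist x z := by rw [dist_eq_norm, ← hsum]; exact hcS u
  · intro h
    choose δ hδ hδK using h
    set C := ∑ i, (δ i)⁻¹
    have hC : 0 ≤ C := sum_nonneg fun i _ => (inv_pos.2 (hδ i)).le
    refine ⟨(1 + C)⁻¹, by positivity, fun u => ?_⟩
    have hcomp : ∀ i, ‖u i‖ ≤ (δ i)⁻¹ * ‖∑ i, (u i : H)‖ := fun i => by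
      rw [inv_mul_eq_div, le_div_iff₀' (hδ i)]
      exact (hδK i _ (u i).2).trans
        (infDist_iSup_ne_le_norm_sum K (fun j => u j) (fun j => (u j).2) i)
    have hu : ‖u‖ ≤ C * ‖∑ i, (u i : H)‖ :=
      calc ‖u‖ ≤ ∑ i, ‖u i‖ := PiLp.norm_le_sum_norm u
        _ ≤ ∑ i, (δ i)⁻¹ * ‖∑ i, (u i : H)‖ := sum_le_sum fun i _ => hcomp i
        _ = C * ‖∑ i, (u i : H)‖ := (sum_mul _ _ _).symm
    rw [inv_mul_le_iff₀ (by positivity)]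
    exact hu.trans (mul_le_mul_of_nonneg_right (by linarith) (norm_nonneg _))

end SumOfSubspaces

namespace ContinuousLinearMap

variable {𝕜 E F : Type*} [RCLike 𝕜] [NormedAddCommGroup E] [InnerProductSpace 𝕜 E]
  [CompleteSpace E] [NormedAddCommGroup F] [InnerProductSpace 𝕜 F] [CompleteSpace F]

theorem antilipschitz_adjoint_comp_self {S : E →L[𝕜] F} {C : NNReal}
    (hS : AntilipschitzWith C S) : AntilipschitzWith (C ^ 2) (S† ∘L S) := by
  refine (S† ∘L S).antilipschitz_of_bound fun v => ?_
  have hSv : ‖S v‖ ^ 2 ≤ ‖(S† ∘L S) v‖ * ‖v‖ :=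
    calc ‖S v‖ ^ 2 = RCLike.re ⟪(S† ∘L S) v, v⟫_𝕜 := by
          rw [comp_apply, adjoint_inner_left, inner_self_eq_norm_sq]
      _ ≤ ‖(S† ∘L S) v‖ * ‖v‖ := (RCLike.re_le_norm _).trans (norm_inner_le_norm _ _)
  have hv : ‖v‖ ^ 2 ≤ C ^ 2 * ‖S v‖ ^ 2 := by
    rw [← mul_pow]; exact pow_le_pow_left₀ (norm_nonneg v) (S.bound_of_antilipschitz hS v) 2
  rcases (norm_nonneg v).eq_or_lt with hv0 | hv0
  · rw [← hv0]; positivity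
  refine le_of_mul_le_mul_right ?_ hv0
  calc ‖v‖ * ‖v‖ = ‖v‖ ^ 2 := (sq _).symm
    _ ≤ C ^ 2 * (‖(S† ∘L S) v‖ * ‖v‖) := hv.trans (by gcongr)
    _ = ((C ^ 2 : NNReal) : ℝ) * ‖(S† ∘L S) v‖ * ‖v‖ := by push_cast; ring

theorem surjective_adjoint_of_antilipschitz {S : E →L[𝕜] F} {C : NNReal}
    (hS : AntilipschitzWith C S) : Function.Surjective (S†) := by
  set A := S† ∘L S
  have hclosed : IsClosed (A.range : Set E) := by
    rw [LinearMap.coe_range]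
    exact (antilipschitz_adjoint_comp_self hS).isClosed_range A.uniformContinuous
  have hdense : A.range.topologicalClosure = ⊤ := by
    have hA : A† = A := by rw [adjoint_comp, adjoint_adjoint]
    rw [← hA, ← orthogonal_ker, ker_adjoint_comp_self,
      LinearMap.ker_eq_bot.2 hS.injective, Submodule.bot_orthogonal_eq_top]
  rw [hclosed.submodule_topologicalClosure_eq] at hdense
  intro u
  obtain ⟨v, rfl⟩ : u ∈ A.range := hdense ▸ Submodule.mem_top
  exact ⟨S v, rfl⟩

theorem exists_antilipschitz_adjoint_of_surjective {T : E →L[𝕜] F}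
    (hT : Function.Surjective T) : ∃ C, AntilipschitzWith C (T†) := by
  obtain ⟨C, hC, hpre⟩ := T.exists_preimage_norm_le hT
  refine ⟨⟨C, hC.le⟩, T†.antilipschitz_of_bound fun u => ?_⟩
  obtain ⟨x, rfl, hx⟩ := hpre u
  have key : ‖T x‖ ^ 2 ≤ C * ‖T x‖ * ‖(T†) (T x)‖ :=
    calc ‖T x‖ ^ 2 = RCLike.re ⟪x, (T†) (T x)⟫_𝕜 := by
          rw [adjoint_inner_right, inner_self_eq_norm_sq]
      _ ≤ ‖x‖ * ‖(T†) (T x)‖ := (RCLike.re_le_norm _).trans (norm_inner_le_norm _ _)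
      _ ≤ C * ‖T x‖ * ‖(T†) (T x)‖ := by gcongr
  rcases (norm_nonneg (T x)).eq_or_lt with h0 | h0
  · rw [← h0]; positivity
  refine le_of_mul_le_mul_left ?_ h0
  calc ‖T x‖ * ‖T x‖ = ‖T x‖ ^ 2 := (sq _).symm
    _ ≤ ‖T x‖ * (C * ‖(T†) (T x)‖) := by linarith

theorem surjective_iff_exists_antilipschitz_adjoint (T : E →L[𝕜] F) :
    Function.Surjective T ↔ ∃ C, AntilipschitzWith C (T†) :=
  ⟨exists_antilipschitz_adjoint_of_surjective, fun ⟨_, hC⟩ =>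
    T.adjoint_adjoint ▸ surjective_adjoint_of_antilipschitz hC⟩

end ContinuousLinearMap

section JointProjection

variable {𝕜 H ι : Type*} [RCLike 𝕜] [NormedAddCommGroup H] [InnerProductSpace 𝕜 H]
  [Fintype ι] (K : ι → Submodule 𝕜 H) [∀ i, CompleteSpace (K i)]

noncomputable def jointProj : H →L[𝕜] PiLp 2 (fun i => K i) :=
  (PiLp.continuousLinearEquiv 2 𝕜 (fun i => K i)).symm.toContinuousLinearMap.comp
    (ContinuousLinearMap.pi fun i => (K i).orthogonalProjectionOnto)

theorem adjoint_jointProj_apply [CompleteSpace H] (u : PiLp 2 (fun i => K i)) :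
    ((jointProj K)†) u = ∑ i, (u i : H) := by
  refine ext_inner_right 𝕜 fun y => ?_
  rw [ContinuousLinearMap.adjoint_inner_left, PiLp.inner_apply, sum_inner]
  exact sum_congr rfl fun i _ => Submodule.inner_orthogonalProjectionOnto_eq_of_mem_left _ _

end JointProjection

theorem ibap_iff_surjective_jointProj {𝕜 H : Type*} [RCLike 𝕜] [NormedAddCommGroup H]
    [InnerProductSpace 𝕜 H] [CompleteSpace H] {n : ℕ} (K : Fin n → Submodule 𝕜 H)
    (hK : ∀ i, IsClosed ((K i : Set H))) [∀ i, CompleteSpace (K i)] :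
    IBAP K hK ↔ Function.Surjective (jointProj K) := by
  constructor
  · intro h u
    obtain ⟨y, hy⟩ := h (fun i => u i) (fun i => (u i).2)
    exact ⟨y, PiLp.ext fun i => Subtype.ext (hy i)⟩
  · intro h x hx
    obtain ⟨y, hy⟩ := h (WithLp.toLp 2 fun i => ⟨x i, hx i⟩)
    exact ⟨y, fun i => congrArg Subtype.val (PiLp.ext_iff.1 hy i)⟩

/-- IBAP iff for every `i` there is `δ > 0` with
`dist(x, Σ_{j ≠ i} K j) ≥ δ ‖x‖` for all `x ∈ K i`. -/
theorem stmt_8 {𝕜 H : Type*} [RCLike 𝕜] [NormedAddCommGroup H]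
    [InnerProductSpace 𝕜 H] [CompleteSpace H] {n : ℕ}
    (K : Fin n → Submodule 𝕜 H) (hK : ∀ i, IsClosed ((K i : Set H))) :
    IBAP K hK ↔
      ∀ i, ∃ δ : ℝ, 0 < δ ∧ ∀ x ∈ K i,
        δ * ‖x‖ ≤ Metric.infDist x
          ((⨆ j, ⨆ (_ : j ≠ i), K j : Submodule 𝕜 H) : Set H) := by
  have := fun i => (hK i).completeSpace_coe
  rw [ibap_iff_surjective_jointProj,
    ContinuousLinearMap.surjective_iff_exists_antilipschitz_adjoint,
    antilipschitzWith_iff_exists_mul_le_norm]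
  simp only [adjoint_jointProj_apply]
  exact exists_mul_norm_le_norm_sum_iff K 2
end

section
/- Let H be a Hilbert space, A : H → H a continuous linear operator, λ_1, ..., λ_n pairwise distinct scalars, and m_1, ..., m_n natural numbers (m_k ≥ 1). Then the system of root subspaces H_k := ker((A − λ_k I)^{m_k}), k = 1, ..., n, possesses the inverse best approximation property. -/
/-! If `E j` acts on `K k` as `δ j k`, then `y = ∑ j, (E j)† (x j)` has `⟪y, z⟫ = ⟪x k, z⟫` for
`z ∈ K k`, so it projects onto `x k`. For root subspaces `E j` is a polynomial in `A` that is
`≡ δ j k` modulo each `(X - λ k) ^ m k`, which exists by the Chinese remainder theorem. -/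

open Function Polynomial

theorem exists_dvd_sub_ite_of_pairwise_isCoprime {R ι : Type*} [CommRing R] [Fintype ι]
    [DecidableEq ι] {f : ι → R} (hf : Pairwise (IsCoprime on f)) :
    ∃ e : ι → R, ∀ j k, f k ∣ e j - if j = k then 1 else 0 := by
  have hcop (k : ι) : IsCoprime (f k) (∏ j ∈ Finset.univ.erase k, f j) :=
    IsCoprime.prod_right fun j hj => hf (Finset.ne_of_mem_erase hj).symm
  choose u v huv using hcop
  refine ⟨fun j => v j * ∏ i ∈ Finset.univ.erase j, f i, fun j k => ?_⟩
  split_ifs with hjk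
  · subst hjk
    exact ⟨-u j, by linear_combination huv j⟩
  · have hk : k ∈ Finset.univ.erase j := by simpa using Ne.symm hjk
    rw [sub_zero]
    exact (Finset.dvd_prod_of_mem f hk).mul_left _

theorem ContinuousLinearMap.aeval_apply_eq_zero_of_dvd {R M : Type*} [CommRing R]
    [TopologicalSpace M] [AddCommGroup M] [IsTopologicalAddGroup M] [Module R M]
    [ContinuousConstSMul R M] (T : M →L[R] M) {f p : R[X]} (hfp : f ∣ p) {z : M}
    (hz : aeval T f z = 0) : aeval T p z = 0 := by
  obtain ⟨q, rfl⟩ := hfp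
  rw [mul_comm, map_mul, mul_apply_eq_comp, hz, map_zero]

theorem IBAP.of_forall_mem_apply_eq_ite {𝕜 H : Type*} [RCLike 𝕜] [NormedAddCommGroup H]
    [InnerProductSpace 𝕜 H] [CompleteSpace H] {n : ℕ} (K : Fin n → Submodule 𝕜 H)
    (hK : ∀ i, IsClosed (K i : Set H)) (E : Fin n → H →L[𝕜] H)
    (hE : ∀ j k, ∀ z ∈ K k, E j z = if j = k then z else 0) :
    IBAP K hK := by
  intro x hx
  refine ⟨∑ j, ContinuousLinearMap.adjoint (E j) (x j), fun k => ?_⟩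
  have : CompleteSpace (K k) := (hK k).completeSpace_coe
  refine Submodule.eq_starProjection_of_mem_of_inner_eq_zero (hx k) fun z hz => ?_
  simp [inner_sub_left, sum_inner, ContinuousLinearMap.adjoint_inner_left, hE _ k z hz, apply_ite]

theorem IBAP.ker_aeval_of_pairwise_isCoprime {𝕜 H : Type*} [RCLike 𝕜] [NormedAddCommGroup H]
    [InnerProductSpace 𝕜 H] [CompleteSpace H] {n : ℕ} (A : H →L[𝕜] H) {f : Fin n → 𝕜[X]}
    (hf : Pairwise (IsCoprime on f)) :
    IBAP (fun k => LinearMap.ker ((aeval A (f k) : H →L[𝕜] H) : H →ₗ[𝕜] H))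
      (fun _ => ContinuousLinearMap.isClosed_ker _) := by
  obtain ⟨e, he⟩ := exists_dvd_sub_ite_of_pairwise_isCoprime hf
  refine IBAP.of_forall_mem_apply_eq_ite _ _ (fun j => aeval A (e j)) fun j k z hz => ?_
  have := ContinuousLinearMap.aeval_apply_eq_zero_of_dvd A (he j k) (LinearMap.mem_ker.mp hz)
  split_ifs at this ⊢ <;> simpa [sub_eq_zero] using this

theorem stmt_15_general {𝕜 H : Type*} [RCLike 𝕜] [NormedAddCommGroup H]
    [InnerProductSpace 𝕜 H] [CompleteSpace H] {n : ℕ}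
    (A : H →L[𝕜] H) (lam : Fin n → 𝕜)
    (hlam : ∀ i j, i ≠ j → lam i ≠ lam j)
    (m : Fin n → ℕ) :
    IBAP (fun k =>
        LinearMap.ker (((A - lam k • (ContinuousLinearMap.id 𝕜 H)) ^ (m k) : H →L[𝕜] H) : H →ₗ[𝕜] H))
      (fun k => ContinuousLinearMap.isClosed_ker _) := by
  have hroot (k : Fin n) : (A - lam k • ContinuousLinearMap.id 𝕜 H) ^ m k
      = aeval A ((X - C (lam k)) ^ m k) := by
    rw [map_pow, map_sub, aeval_X, aeval_C, Algebra.algebraMap_eq_smul_one]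
    rfl
  simp only [hroot]
  exact IBAP.ker_aeval_of_pairwise_isCoprime A fun i j hij =>
    (pairwise_coprime_X_sub_C (fun i j => not_imp_not.mp (hlam i j)) hij).pow

/-- the root subspaces `ker ((A - lam k • I) ^ (m k))` of a
continuous linear operator, for pairwise distinct scalars `lam k` and natural
numbers `m k ≥ 1`, possess the IBAP. -/
theorem stmt_15 {𝕜 H : Type*} [RCLike 𝕜] [NormedAddCommGroup H]
    [InnerProductSpace 𝕜 H] [CompleteSpace H] {n : ℕ}
    (A : H →L[𝕜] H) (lam : Fin n → 𝕜)
    (hlam : ∀ i j, i ≠ j → lam i ≠ lam j)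
    (m : Fin n → ℕ) (hm : ∀ k, 1 ≤ m k) :
    IBAP (fun k =>
        LinearMap.ker (((A - lam k • (ContinuousLinearMap.id 𝕜 H)) ^ (m k) : H →L[𝕜] H) : H →ₗ[𝕜] H))
      (fun k => ContinuousLinearMap.isClosed_ker _) :=
  stmt_15_general A lam hlam m
end

section
/- Let H be a Hilbert space and M, N two closed subspaces of H, and let P denote the orthogonal projection onto M. If ‖P_M − P_N‖ < 1 (where P_M, P_N are the orthogonal projections onto M and N), then P maps N onto M, i.e., P(N) = M. -/
/-! Since `‖P_M (P_M - P_N) P_M‖ ≤ ‖P_M - P_N‖ < 1`, the operator `1 - P_M (P_M - P_N) P_M` is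
invertible by the Neumann series. Writing `x ∈ M` as `(1 - P_M (P_M - P_N) P_M) y` and applying
`P_M` gives `x = P_M x = P_M (P_N (P_M y))` because `P_M² = P_M`. -/

theorem orthProjCLM_eq_starProjection {𝕜 H : Type*} [RCLike 𝕜] [NormedAddCommGroup H]
    [InnerProductSpace 𝕜 H] [CompleteSpace H] (K : Submodule 𝕜 H) (hK : IsClosed (K : Set H))
    [CompleteSpace K] : orthProjCLM K hK = K.starProjection :=
  rfl

theorem Submodule.coe_range_starProjection {𝕜 H : Type*} [RCLike 𝕜] [NormedAddCommGroup H]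
    [InnerProductSpace 𝕜 H] (K : Submodule 𝕜 H) [K.HasOrthogonalProjection] :
    Set.range K.starProjection = K := by
  ext x
  exact ⟨fun ⟨y, hy⟩ ↦ hy ▸ K.coe_mem (K.orthogonalProjectionOnto y),
    fun hx ↦ ⟨x, Submodule.starProjection_eq_self_iff.mpr hx⟩⟩

namespace ContinuousLinearMap

variable {𝕜 E : Type*} [NontriviallyNormedField 𝕜] [NormedAddCommGroup E] [NormedSpace 𝕜 E]
  [CompleteSpace E]

theorem range_subset_image_range_of_norm_sub_lt_one {P Q : E →L[𝕜] E} (hP : IsIdempotentElem P)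
    (hP_norm : ‖P‖ ≤ 1) (hPQ : ‖P - Q‖ < 1) : Set.range P ⊆ P '' Set.range Q := by
  rintro _ ⟨x, rfl⟩
  have hsmall : ‖P * (P - Q) * P‖ < 1 :=
    calc ‖P * (P - Q) * P‖ ≤ ‖P‖ * ‖P - Q‖ * ‖P‖ := norm_mul₃_le
      _ ≤ 1 * ‖P - Q‖ * 1 := by gcongr
      _ < 1 := by simpa using hPQ
  set u := Units.oneSub _ hsmall
  have hPu : P * u = P * Q * P := by
    rw [Units.val_oneSub, mul_sub, mul_one, ← mul_assoc, ← mul_assoc, hP.eq, mul_sub, sub_mul,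
      hP.eq, hP.eq, sub_sub_cancel]
  refine ⟨Q (P ((↑u⁻¹ : E →L[𝕜] E) (P x))), ⟨_, rfl⟩, ?_⟩
  calc P (Q (P ((↑u⁻¹ : E →L[𝕜] E) (P x)))) = (P * u * ↑u⁻¹) (P x) := by rw [hPu]; rfl
    _ = P x := by rw [mul_assoc, u.mul_inv, mul_one]; exact DFunLike.congr_fun hP.eq x

end ContinuousLinearMap

/-- if the opening `‖P_M - P_N‖` between two closed subspaces is
less than `1`, then the orthogonal projection onto `M` maps `N` onto `M`. -/
theorem stmt_17 {𝕜 H : Type*} [RCLike 𝕜] [NormedAddCommGroup H]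
    [InnerProductSpace 𝕜 H] [CompleteSpace H]
    (M N : Submodule 𝕜 H)
    (hM : IsClosed (M : Set H)) (hN : IsClosed (N : Set H))
    (h : ‖orthProjCLM M hM - orthProjCLM N hN‖ < 1) :
    orthProjCLM M hM '' (N : Set H) = (M : Set H) := by
  have : CompleteSpace M := hM.completeSpace_coe
  have : CompleteSpace N := hN.completeSpace_coe
  rw [orthProjCLM_eq_starProjection, orthProjCLM_eq_starProjection] at h
  rw [orthProjCLM_eq_starProjection]
  refine ((Set.image_subset_range _ _).trans (Submodule.coe_range_starProjection M).le).antisymm ?_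
  calc (M : Set H) = Set.range M.starProjection := (Submodule.coe_range_starProjection M).symm
    _ ⊆ M.starProjection '' Set.range N.starProjection :=
      ContinuousLinearMap.range_subset_image_range_of_norm_sub_lt_one
        M.isIdempotentElem_starProjection M.starProjection_norm_le h
    _ = M.starProjection '' N := by rw [Submodule.coe_range_starProjection N]
end
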